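/- arXiv:2211.14259 — 6 statements merged into one kernel-verified Lean document; each statement's English description precedes it below -/
import Mathlib

section
/- Let T be a finite rooted tree with n vertices in which every internal (non-leaf) vertex has at least k children, where k ≥ 2 is even. Then there exists a subtree T' of T containing the root such that every internal vertex of T' retains at least k/2 of its children in T, and every vertex of T' is at depth at most log₂(n) from the root. (Proof idea: at each level keep for every surviving vertex the k/2 children with the fewest descendants; the total number of descendants at least halves with each level.) -/
open Finset

private lemma sum_biUnion_le' {α β : Type} [DecidableEq β] (s : Finset α)
    (t : α → Finset β) (f : β → ℕ) :
    ∑ x ∈ s.biUnion t, f x ≤ ∑ a ∈ s, ∑ x ∈ t a, f x := by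
  classical
  induction s using Finset.induction_on with
  | empty => simp
  | @insert a s ha ih =>
    rw [Finset.biUnion_insert, Finset.sum_insert ha]
    have h1 : ∑ x ∈ t a ∪ s.biUnion t, f x
        ≤ ∑ x ∈ t a, f x + ∑ x ∈ s.biUnion t, f x := by
      rw [← Finset.union_sdiff_self_eq_union, Finset.sum_union Finset.disjoint_sdiff]
      have := Finset.sum_le_sum_of_subset (f := f) (Finset.sdiff_subset (s := s.biUnion t) (t := t a))
      omega
    omega

/-- Bounded-depth subtree: a rooted tree with n vertices in which every internal vertex
has at least k children (k ≥ 2 even) contains a root subtree in which every internal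
vertex keeps at least k/2 of its children and all vertices have depth ≤ log₂ n. -/
theorem stmt0 {V : Type} [Fintype V] [DecidableEq V]
    (root : V) (parent : V → V) (depth : V → ℕ)
    (hroot : depth root = 0)
    (hdepth : ∀ v, v ≠ root → depth (parent v) + 1 = depth v)
    (k : ℕ) (hk2 : 2 ≤ k) (hkeven : Even k)
    (hchild : ∀ v : V,
      (Finset.univ.filter (fun u => parent u = v ∧ u ≠ root)).Nonempty →
      k ≤ (Finset.univ.filter (fun u => parent u = v ∧ u ≠ root)).card) :
    ∃ T' : Finset V, root ∈ T' ∧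
      (∀ v ∈ T', v ≠ root → parent v ∈ T') ∧
      (∀ v ∈ T',
        (Finset.univ.filter (fun u => parent u = v ∧ u ≠ root)).Nonempty →
        k / 2 ≤ ((Finset.univ.filter (fun u => parent u = v ∧ u ≠ root)) ∩ T').card) ∧
      (∀ v ∈ T', depth v ≤ Nat.log 2 (Fintype.card V)) := by
  classical
  set n := Fintype.card V with hn
  -- children of a vertex
  set C : V → Finset V := fun v => Finset.univ.filter (fun u => parent u = v ∧ u ≠ root)
    with hC
  have hmemC : ∀ {u v : V}, u ∈ C v ↔ parent u = v ∧ u ≠ root := by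
    intro u v; simp [hC]
  -- depth along iterates
  have hiter : ∀ m : ℕ, ∀ u : V, m ≤ depth u → depth (parent^[m] u) + m = depth u := by
    intro m
    induction m with
    | zero => simp
    | succ p ih =>
      intro u h
      rw [Function.iterate_succ_apply]
      have hu : u ≠ root := by
        intro he; rw [he, hroot] at h; omega
      have h1 := hdepth u hu
      have h2 := ih (parent u) (by omega)
      omega
  -- descendant sets
  set D : V → Finset V := fun v =>
    Finset.univ.filter (fun u => depth v ≤ depth u ∧ parent^[depth u - depth v] u = v)
    with hD
  have hmemD : ∀ {u v : V},
      u ∈ D v ↔ depth v ≤ depth u ∧ parent^[depth u - depth v] u = v := by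
    intro u v; simp [hD]
  have hself : ∀ v, v ∈ D v := by
    intro v; rw [hmemD]; simp
  set w : V → ℕ := fun v => (D v).card with hw
  have hw1 : ∀ v, 1 ≤ w v := fun v => Finset.card_pos.mpr ⟨v, hself v⟩
  have hcdepth : ∀ {c v : V}, c ∈ C v → depth c = depth v + 1 := by
    intro c v hc
    rw [hmemC] at hc
    have := hdepth c hc.2
    rw [hc.1] at this; omega
  -- D c ⊆ (D v).erase v for child c of v
  have hsub : ∀ {c v : V}, c ∈ C v → D c ⊆ (D v).erase v := by
    intro c v hc u hu
    have hdc := hcdepth hc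
    rw [hmemD] at hu
    rw [hmemC] at hc
    rw [Finset.mem_erase, hmemD]
    have h1 : depth v ≤ depth u := by omega
    have h2 : depth u - depth v = (depth u - depth c) + 1 := by omega
    refine ⟨?_, h1, ?_⟩
    · intro he; rw [he] at hu; omega
    · rw [h2, Function.iterate_succ_apply', hu.2, hc.1]
  -- distinct children have disjoint descendant sets
  have hdisj : ∀ v : V, ∀ c ∈ C v, ∀ c' ∈ C v, c ≠ c' → Disjoint (D c) (D c') := by
    intro v c hc c' hc' hne
    rw [Finset.disjoint_left]
    intro u hu hu'
    rw [hmemD] at hu hu'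
    have h1 := hcdepth hc
    have h2 := hcdepth hc'
    apply hne
    rw [← hu.2, ← hu'.2, h1, h2]
  -- sum of children weights bound
  have hsumC : ∀ v : V, (∑ c ∈ C v, w c) + 1 ≤ w v := by
    intro v
    have h1 : (C v).biUnion D ⊆ (D v).erase v := by
      intro u hu
      rw [Finset.mem_biUnion] at hu
      obtain ⟨c, hc, hu⟩ := hu
      exact hsub hc hu
    have h2 : ((C v).biUnion D).card = ∑ c ∈ C v, w c :=
      Finset.card_biUnion (hdisj v)
    have h3 := Finset.card_le_card h1
    rw [h2, Finset.card_erase_of_mem (hself v)] at h3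
    have hwv : w v = (D v).card := rfl
    have := hw1 v
    omega
  -- choose k/2 lightest children
  have hchoose : ∀ v : V, ∃ A : Finset V, A ⊆ C v ∧
      ((C v).Nonempty → k / 2 ≤ A.card ∧ 2 * (∑ a ∈ A, w a) ≤ ∑ c ∈ C v, w c) := by
    intro v
    by_cases hne : (C v).Nonempty
    · have hk := hchild v (by simpa [hC] using hne)
      have hkC : k ≤ (C v).card := by simpa [hC] using hk
      set s := k / 2 with hs
      have hsle : s ≤ (C v).card := le_trans (Nat.div_le_self k 2) hkC
      obtain ⟨A, hA, hAmin⟩ := Finset.exists_min_image (Finset.powersetCard s (C v))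
        (fun A => ∑ a ∈ A, w a) (Finset.powersetCard_nonempty.mpr hsle)
      rw [Finset.mem_powersetCard] at hA
      have hks : k = 2 * s := (Nat.two_mul_div_two_of_even hkeven).symm
      -- a disjoint comparison set
      have hcd : s ≤ (C v \ A).card := by
        rw [Finset.card_sdiff_of_subset hA.1, hA.2]; omega
      obtain ⟨B, hB, hBcard⟩ := Finset.exists_subset_card_eq hcd
      have hBC : B ⊆ C v := hB.trans (Finset.sdiff_subset)
      have hAB : Disjoint A B := by
        rw [Finset.disjoint_right]
        intro x hx
        exact (Finset.mem_sdiff.mp (hB hx)).2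
      have hmin : (∑ a ∈ A, w a) ≤ ∑ a ∈ B, w a := by
        apply hAmin
        rw [Finset.mem_powersetCard]; exact ⟨hBC, hBcard⟩
      have hsumAB : (∑ a ∈ A, w a) + (∑ a ∈ B, w a) ≤ ∑ c ∈ C v, w c := by
        rw [← Finset.sum_union hAB]
        exact Finset.sum_le_sum_of_subset (Finset.union_subset hA.1 hBC)
      exact ⟨A, hA.1, fun _ => ⟨hA.2 ▸ le_refl s, by omega⟩⟩
    · exact ⟨∅, Finset.empty_subset _, fun h => absurd h hne⟩
  choose ch hch1 hch2 using hchoose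
  -- per-vertex weight inequality
  have hkey : ∀ v : V, 2 * (∑ a ∈ ch v, w a) + 1 ≤ w v := by
    intro v
    by_cases hne : (C v).Nonempty
    · have := (hch2 v hne).2
      have := hsumC v
      omega
    · rw [Finset.not_nonempty_iff_eq_empty] at hne
      have hchv : ch v = ∅ := Finset.subset_empty.mp (hne ▸ hch1 v)
      rw [hchv]
      simpa using hw1 v
  -- the selection by levels
  set sel : ℕ → Finset V := fun d => Nat.rec {root} (fun _ S => S.biUnion ch) d with hsel
  have hsel0 : sel 0 = {root} := rfl
  have hselS : ∀ d, sel (d + 1) = (sel d).biUnion ch := fun d => rfl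
  have hseldepth : ∀ d, ∀ v ∈ sel d, depth v = d := by
    intro d
    induction d with
    | zero => intro v hv; rw [hsel0, Finset.mem_singleton] at hv; rw [hv, hroot]
    | succ e ih =>
      intro v hv
      rw [hselS, Finset.mem_biUnion] at hv
      obtain ⟨p, hp, hv⟩ := hv
      have hvc := hch1 p hv
      have := hcdepth hvc
      rw [hmemC] at hvc
      rw [this, ih p hp]
  set W : ℕ → ℕ := fun d => ∑ v ∈ sel d, w v with hW
  have hWstep : ∀ d, 2 * W (d + 1) ≤ W d := by
    intro d
    have e1 : W (d + 1) = ∑ x ∈ (sel d).biUnion ch, w x := rfl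
    have e2 : W d = ∑ v ∈ sel d, w v := rfl
    have h1 : ∑ x ∈ (sel d).biUnion ch, w x ≤ ∑ v ∈ sel d, ∑ a ∈ ch v, w a :=
      sum_biUnion_le' (sel d) ch w
    have h2 : ∑ v ∈ sel d, (2 * (∑ a ∈ ch v, w a)) ≤ ∑ v ∈ sel d, w v :=
      Finset.sum_le_sum (fun v _ => by have := hkey v; omega)
    have h3 : ∑ v ∈ sel d, (2 * (∑ a ∈ ch v, w a)) = 2 * ∑ v ∈ sel d, ∑ a ∈ ch v, w a :=
      (Finset.mul_sum _ _ _).symm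
    omega
  have hWpow : ∀ d, 2 ^ d * W d ≤ W 0 := by
    intro d
    induction d with
    | zero => simp
    | succ e ih =>
      have := hWstep e
      calc 2 ^ (e+1) * W (e+1) = 2 ^ e * (2 * W (e+1)) := by ring
        _ ≤ 2 ^ e * W e := Nat.mul_le_mul_left _ this
        _ ≤ W 0 := ih
  have hW0 : W 0 ≤ n := by
    have e1 : W 0 = w root := by
      show ∑ v ∈ sel 0, w v = w root
      rw [hsel0, Finset.sum_singleton]
    have e2 : w root = (D root).card := rfl
    have h := Finset.card_le_univ (D root)
    omega
  -- if sel d is nonempty then 2^d ≤ n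
  have hpow : ∀ d, ∀ v ∈ sel d, 2 ^ d ≤ n := by
    intro d v hv
    have h1 : w v ≤ W d := Finset.single_le_sum (fun x _ => Nat.zero_le _) hv
    have h2 := hw1 v
    have h3 := hWpow d
    have : 2 ^ d * 1 ≤ 2 ^ d * W d := Nat.mul_le_mul_left _ (by omega)
    omega
  refine ⟨(Finset.range (n + 1)).biUnion sel, ?_, ?_, ?_, ?_⟩
  · rw [Finset.mem_biUnion]
    exact ⟨0, Finset.mem_range.mpr (by omega), by rw [hsel0]; simp⟩
  · intro v hv hvr
    rw [Finset.mem_biUnion] at hv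
    obtain ⟨d, hd, hv⟩ := hv
    have hdv := hseldepth d v hv
    have : depth v ≠ 0 := by
      have := hdepth v hvr; omega
    obtain ⟨e, rfl⟩ : ∃ e, d = e + 1 := ⟨d - 1, by omega⟩
    rw [hselS, Finset.mem_biUnion] at hv
    obtain ⟨p, hp, hvch⟩ := hv
    have hpc := hmemC.mp (hch1 p hvch)
    rw [Finset.mem_biUnion]
    rw [Finset.mem_range] at hd
    refine ⟨e, Finset.mem_range.mpr (by omega), ?_⟩
    rw [hpc.1]
    exact hp
  · intro v hv hne
    rw [Finset.mem_biUnion] at hv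
    obtain ⟨d, hd, hv⟩ := hv
    have hCne : (C v).Nonempty := by simpa [hC] using hne
    have hcard := (hch2 v hCne).1
    have h2d := hpow d v hv
    have hdlt : d < n := lt_of_lt_of_le (Nat.lt_two_pow_self (n := d)) h2d
    have hchsub : ch v ⊆ (Finset.univ.filter fun u => parent u = v ∧ u ≠ root) ∩
        (Finset.range (n + 1)).biUnion sel := by
      intro a ha
      rw [Finset.mem_inter]
      constructor
      · simpa [hC] using hch1 v ha
      · rw [Finset.mem_biUnion]
        refine ⟨d + 1, Finset.mem_range.mpr (by omega), ?_⟩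
        rw [hselS, Finset.mem_biUnion]
        exact ⟨v, hv, ha⟩
    exact le_trans hcard (Finset.card_le_card hchsub)
  · intro v hv
    rw [Finset.mem_biUnion] at hv
    obtain ⟨d, hd, hv⟩ := hv
    have h2d := hpow d v hv
    have hn0 : n ≠ 0 := by
      have : (0:ℕ) < Fintype.card V := Fintype.card_pos_iff.mpr ⟨root⟩
      omega
    rw [hseldepth d v hv]
    exact (Nat.le_log_iff_pow_le (by omega) hn0).mpr h2d
end

section
/- Let G = (U ∪ U', F) be a finite bipartite multigraph, and let k, K be positive integers with K dividing k. Suppose every vertex u ∈ U has degree at least k and every vertex u' ∈ U' has degree at most K. Then there exists a subset F' ⊆ F of edges such that every u ∈ U is incident to at least k/K edges of F' and every u' ∈ U' is incident to at most one edge of F'. (This follows from the integrality of the bipartite b-matching polytope, by considering the fractional selection assigning weight 1/K to every edge.) -/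
/-- Removing congestion via bipartite b-matching: if every vertex of U has degree ≥ k and
every vertex of U' has degree ≤ K with K ∣ k, there is an edge subset giving every u ∈ U
at least k/K edges while every u' ∈ U' is incident to at most one chosen edge. -/
theorem stmt1 {U U' F : Type} [Fintype F] [DecidableEq U] [DecidableEq U']
    (eU : F → U) (eU' : F → U') (k K : ℕ) (hK : 0 < K) (hdvd : K ∣ k)
    (hU : ∀ u : U, k ≤ (Finset.univ.filter (fun e => eU e = u)).card)
    (hU' : ∀ u' : U', (Finset.univ.filter (fun e => eU' e = u')).card ≤ K) :
    ∃ F' : Finset F,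
      (∀ u : U, k / K ≤ (F'.filter (fun e => eU e = u)).card) ∧
      (∀ u' : U', (F'.filter (fun e => eU' e = u')).card ≤ 1) := by
  classical
  set d := k / K with hd
  have hkd : K * d = k := Nat.mul_div_cancel' hdvd
  set T : U → Finset U' := fun u => (Finset.univ.filter (fun e => eU e = u)).image eU' with hT
  set t : U × Fin d → Finset U' := fun v => T v.1 with ht
  -- Hall's condition
  have hall : ∀ s : Finset (U × Fin d), s.card ≤ (s.biUnion t).card := by
    intro s
    set A := s.image Prod.fst with hA
    have hbU : s.biUnion t = A.biUnion T := by
      ext x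
      simp only [Finset.mem_biUnion, hA, Finset.mem_image, ht]
      constructor
      · rintro ⟨v, hv, hx⟩; exact ⟨v.1, ⟨v, hv, rfl⟩, hx⟩
      · rintro ⟨u, ⟨v, hv, rfl⟩, hx⟩; exact ⟨v, hv, hx⟩
    have h1 : s.card ≤ A.card * d := by
      calc s.card ≤ (A ×ˢ (Finset.univ : Finset (Fin d))).card := by
            apply Finset.card_le_card
            intro v hv
            rw [Finset.mem_product]
            exact ⟨Finset.mem_image_of_mem _ hv, Finset.mem_univ _⟩
        _ = A.card * d := by simp [Finset.card_product]
    set N := A.biUnion T with hN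
    -- edge counting
    set E := A.biUnion (fun u => Finset.univ.filter (fun e => eU e = u)) with hE
    have hElb : A.card * k ≤ E.card := by
      rw [hE, Finset.card_biUnion]
      · calc A.card * k = ∑ _u ∈ A, k := by rw [Finset.sum_const, smul_eq_mul, mul_comm]
          _ ≤ ∑ u ∈ A, (Finset.univ.filter (fun e => eU e = u)).card :=
            Finset.sum_le_sum (fun u _ => hU u)
      · intro u1 _ u2 _ hne
        apply Finset.disjoint_left.mpr
        intro e he1 he2
        simp only [Finset.mem_filter] at he1 he2
        exact hne (he1.2 ▸ he2.2)
    have hEub : E.card ≤ N.card * K := by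
      have hsub : E ⊆ N.biUnion (fun u' => Finset.univ.filter (fun e => eU' e = u')) := by
        intro e he
        rw [hE, Finset.mem_biUnion] at he
        obtain ⟨u, hu, he⟩ := he
        rw [Finset.mem_biUnion]
        refine ⟨eU' e, ?_, by simp⟩
        rw [hN, Finset.mem_biUnion]
        exact ⟨u, hu, Finset.mem_image_of_mem _ he⟩
      calc E.card ≤ (N.biUnion (fun u' => Finset.univ.filter (fun e => eU' e = u'))).card :=
            Finset.card_le_card hsub
        _ ≤ ∑ u' ∈ N, (Finset.univ.filter (fun e => eU' e = u')).card :=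
            Finset.card_biUnion_le
        _ ≤ ∑ _u' ∈ N, K := Finset.sum_le_sum (fun u' _ => hU' u')
        _ = N.card * K := by rw [Finset.sum_const, smul_eq_mul]
    have h2 : A.card * d ≤ N.card := by
      have : A.card * d * K ≤ N.card * K := by
        calc A.card * d * K = A.card * k := by rw [← hkd]; ring
          _ ≤ E.card := hElb
          _ ≤ N.card * K := hEub
      exact Nat.le_of_mul_le_mul_right this hK
    rw [hbU]
    exact h1.trans h2
  obtain ⟨f, hfinj, hft⟩ := (Finset.all_card_le_biUnion_card_iff_exists_injective t).mp hall
  have hmem : ∀ v : U × Fin d, ∃ e, (eU e = v.1) ∧ eU' e = f v := by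
    intro v
    have : f v ∈ T v.1 := hft v
    simp only [hT, Finset.mem_image, Finset.mem_filter, Finset.mem_univ, true_and] at this
    obtain ⟨e, he1, he2⟩ := this
    exact ⟨e, he1, he2⟩
  choose g hg1 hg2 using hmem
  have hginj : Function.Injective g := by
    intro v1 v2 h
    apply hfinj
    rw [← hg2 v1, ← hg2 v2, h]
  refine ⟨Finset.univ.filter (fun e => ∃ v : U × Fin d, g v = e), ?_, ?_⟩
  · intro u
    have : ((Finset.univ : Finset (Fin d)).image (fun i => g (u, i))).card = d := by
      rw [Finset.card_image_of_injective _ (fun i j hij => by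
        have := hginj hij; exact (Prod.mk.injEq _ _ _ _).mp this |>.2)]
      simp
    calc d = ((Finset.univ : Finset (Fin d)).image (fun i => g (u, i))).card := this.symm
      _ ≤ _ := by
        apply Finset.card_le_card
        intro e he
        simp only [Finset.mem_image, Finset.mem_univ, true_and] at he
        obtain ⟨i, rfl⟩ := he
        simp only [Finset.mem_filter, Finset.mem_univ, true_and]
        exact ⟨⟨(u, i), rfl⟩, hg1 (u, i)⟩
  · intro u'
    rw [Finset.card_le_one]
    intro e1 he1 e2 he2
    simp only [Finset.mem_filter, Finset.mem_univ, true_and] at he1 he2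
    obtain ⟨⟨v1, rfl⟩, hu1⟩ := he1
    obtain ⟨⟨v2, rfl⟩, hu2⟩ := he2
    have : f v1 = f v2 := by rw [← hg2 v1, ← hg2 v2, hu1, hu2]
    rw [hfinj this]
end

section
/- Bottom-to-top pruning lemma: Let Q be a set of paths forming a degree-k solution (every source path is in Q, and every open path p ∈ Q has exactly k children in Q). Let ℓ ≥ 7 be an integer and let R ⊆ Q be a set of paths such that for every p ∈ Q \ R, the number of descendants of p at distance exactly ℓ that belong to R is at most k^ℓ/(8ℓ)². Then there exists Q' ⊆ Q \ R such that every open path in Q' has at least k/(2ℓ) children in Q', and moreover every source path (s) such that for all ℓ' ≤ ℓ the number of distance-ℓ' descendants of (s) in R is at most k^(ℓ')/(8ℓ) remains in Q'. -/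
def descAt {V : Type} [DecidableEq V] (Q : Finset (List V)) (p : List V) (d : ℕ) :
    Finset (List V) :=
  Q.filter (fun q => p <+: q ∧ q.length = p.length + d)

open Classical in
noncomputable def badF {V : Type} [DecidableEq V] (Sink : Set V) (Q R : Finset (List V))
    (k ℓ : ℕ) : ℕ → List V → Prop
  | 0, p => p ∈ R
  | n+1, p => p ∈ R ∨ ((∀ v, p.getLast? = some v → v ∉ Sink) ∧
      ((Q.filter (fun q => p <+: q ∧ q.length = p.length + 1 ∧
        ¬ badF Sink Q R k ℓ n q)).card : ℝ) < (k:ℝ)/(2*(ℓ:ℝ)))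

def BadP {V : Type} [DecidableEq V] (Sink : Set V) (Q R : Finset (List V))
    (k ℓ M : ℕ) (p : List V) : Prop :=
  badF Sink Q R k ℓ (M + 1 - p.length) p

open Classical in
noncomputable def Dset {V : Type} [DecidableEq V] (Sink : Set V) (R : Finset (List V))
    (Q : Finset (List V)) (p : List V) (d : ℕ) : Finset (List V) :=
  (descAt Q p d).filter (fun x => ∀ u : List V, p <+: u → u <+: x → u ≠ p → u ≠ x →
    (u ∉ R ∧ ∀ v, u.getLast? = some v → v ∉ Sink))

open Classical in
noncomputable def Tset {V : Type} [DecidableEq V] (Sink : Set V) (Q R : Finset (List V))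
    (k ℓ M : ℕ) (p : List V) (d : ℕ) : Finset (List V) :=
  (descAt Q p d).filter (fun x => BadP Sink Q R k ℓ M x ∧
    ∀ u : List V, p <+: u → u <+: x → u ≠ p → u ≠ x →
      (BadP Sink Q R k ℓ M u ∧ u ∉ R))

section
variable {V : Type} [DecidableEq V] {Sink : Set V} {Q R : Finset (List V)} {k ℓ M : ℕ}

lemma mem_descAt {p q : List V} {d : ℕ} :
    q ∈ descAt Q p d ↔ q ∈ Q ∧ p <+: q ∧ q.length = p.length + d := by
  simp [descAt, Finset.mem_filter, and_assoc]

lemma badP_of_mem_R {p : List V} (hp : p ∈ R) : BadP Sink Q R k ℓ M p := by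
  unfold BadP
  cases h : M + 1 - p.length with
  | zero => exact hp
  | succ n => exact Or.inl hp

open Classical in
lemma badP_iff {p : List V} (hpM : p.length ≤ M) :
    BadP Sink Q R k ℓ M p ↔ (p ∈ R ∨ ((∀ v, p.getLast? = some v → v ∉ Sink) ∧
      (((descAt Q p 1).filter (fun q => ¬ BadP Sink Q R k ℓ M q)).card : ℝ)
        < (k:ℝ)/(2*(ℓ:ℝ)))) := by
  classical
  have h1 : M + 1 - p.length = (M - p.length) + 1 := by omega
  have hset : (Q.filter (fun q => p <+: q ∧ q.length = p.length + 1 ∧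
        ¬ badF Sink Q R k ℓ (M - p.length) q))
      = ((descAt Q p 1).filter (fun q => ¬ BadP Sink Q R k ℓ M q)) := by
    ext q
    simp only [Finset.mem_filter, mem_descAt]
    constructor
    · rintro ⟨hq, h2, h3, h4⟩
      refine ⟨⟨hq, h2, h3⟩, ?_⟩
      unfold BadP
      rwa [show M + 1 - q.length = M - p.length by omega]
    · rintro ⟨⟨hq, h2, h3⟩, h4⟩
      refine ⟨hq, h2, h3, ?_⟩
      unfold BadP at h4
      rwa [show M + 1 - q.length = M - p.length by omega] at h4
  unfold BadP
  rw [h1]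
  rw [badF]
  rw [hset]
  exact Iff.rfl

lemma mem_Dset {p x : List V} {d : ℕ} :
    x ∈ Dset Sink R Q p d ↔ (x ∈ Q ∧ p <+: x ∧ x.length = p.length + d) ∧
      ∀ u : List V, p <+: u → u <+: x → u ≠ p → u ≠ x →
        (u ∉ R ∧ ∀ v, u.getLast? = some v → v ∉ Sink) := by
  classical
  rw [Dset, Finset.mem_filter, mem_descAt]

lemma mem_Tset {p x : List V} {d : ℕ} :
    x ∈ Tset Sink Q R k ℓ M p d ↔ (x ∈ Q ∧ p <+: x ∧ x.length = p.length + d) ∧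
      (BadP Sink Q R k ℓ M x ∧
      ∀ u : List V, p <+: u → u <+: x → u ≠ p → u ≠ x →
        (BadP Sink Q R k ℓ M u ∧ u ∉ R)) := by
  classical
  rw [Tset, Finset.mem_filter, mem_descAt]

open Classical in
lemma bad_not_R {p : List V} (hpM : p.length ≤ M) (hb : BadP Sink Q R k ℓ M p)
    (hpR : p ∉ R)
    (hdegp : (∀ v, p.getLast? = some v → v ∉ Sink) → (descAt Q p 1).card = k) :
    (∀ v, p.getLast? = some v → v ∉ Sink) ∧
    (k:ℝ)*(1 - 1/(2*(ℓ:ℝ))) <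
      (((descAt Q p 1).filter (fun q => BadP Sink Q R k ℓ M q)).card : ℝ) := by
  rcases (badP_iff hpM).1 hb with h | ⟨hop, hcard⟩
  · exact absurd h hpR
  refine ⟨hop, ?_⟩
  have hk := hdegp hop
  have hsplit := Finset.card_filter_add_card_filter_not
    (s := descAt Q p 1) (p := fun q => BadP Sink Q R k ℓ M q)
  rw [hk] at hsplit
  have hsplit' : (((descAt Q p 1).filter (fun q => BadP Sink Q R k ℓ M q)).card : ℝ) +
      (((descAt Q p 1).filter (fun q => ¬ BadP Sink Q R k ℓ M q)).card : ℝ) = (k:ℝ) := by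
    exact_mod_cast congrArg (Nat.cast : ℕ → ℝ) hsplit
  have hr : (k:ℝ)*(1 - 1/(2*(ℓ:ℝ))) = (k:ℝ) - (k:ℝ)/(2*(ℓ:ℝ)) := by ring
  linarith

lemma open_of_bad_not_R {p : List V} (hpM : p.length ≤ M) (hb : BadP Sink Q R k ℓ M p)
    (hpR : p ∉ R) : (∀ v, p.getLast? = some v → v ∉ Sink) := by
  rcases (badP_iff hpM).1 hb with h | ⟨hop, _⟩
  · exact absurd h hpR
  · exact hop

open Classical in
lemma Tstep (hM : ∀ p ∈ Q, p.length ≤ M)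
    (hdeg : ∀ p ∈ Q, (∀ v, p.getLast? = some v → v ∉ Sink) → (descAt Q p 1).card = k)
    (p : List V) (d : ℕ) :
    (k:ℝ)*(1 - 1/(2*(ℓ:ℝ))) *
        (((Tset Sink Q R k ℓ M p d).card:ℝ) - (((Tset Sink Q R k ℓ M p d) ∩ R).card:ℝ))
      ≤ ((Tset Sink Q R k ℓ M p (d+1)).card:ℝ) := by
  classical
  set T := Tset Sink Q R k ℓ M p with hT
  set S0 := T d \ R with hS0
  have hmemS0 : ∀ q ∈ S0, q ∈ Q ∧ p <+: q ∧ q.length = p.length + d ∧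
      BadP Sink Q R k ℓ M q ∧ q ∉ R ∧
      (∀ u : List V, p <+: u → u <+: q → u ≠ p → u ≠ q →
        (BadP Sink Q R k ℓ M u ∧ u ∉ R)) := by
    intro q hq
    rcases Finset.mem_sdiff.1 hq with ⟨hq1, hq2⟩
    rcases mem_Tset.1 hq1 with ⟨⟨h1, h2, h3⟩, h4, h5⟩
    exact ⟨h1, h2, h3, h4, hq2, h5⟩
  have hsub : S0.biUnion (fun q => (descAt Q q 1).filter (fun c => BadP Sink Q R k ℓ M c))
      ⊆ T (d+1) := by
    intro c hc
    rcases Finset.mem_biUnion.1 hc with ⟨q, hq, hc⟩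
    rcases Finset.mem_filter.1 hc with ⟨hc1, hbc⟩
    rcases mem_descAt.1 hc1 with ⟨hcQ, hqc, hclen⟩
    obtain ⟨hqQ, hpq, hqlen, hbq, hqR, hchain⟩ := hmemS0 q hq
    refine mem_Tset.2 ⟨⟨hcQ, hpq.trans hqc, by omega⟩, hbc, ?_⟩
    intro u hpu huc hup huc'
    rcases le_or_gt u.length q.length with hle | hlt
    · have huq : u <+: q := List.prefix_of_prefix_length_le huc hqc hle
      by_cases hueq : u = q
      · subst hueq; exact ⟨hbq, hqR⟩
      · exact hchain u hpu huq hup hueq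
    · have hqu : q <+: u := List.prefix_of_prefix_length_le hqc huc hlt.le
      have : u = c := huc.eq_of_length (by have := huc.length_le; omega)
      exact absurd this huc'
  have hdisj : ∀ q1 ∈ S0, ∀ q2 ∈ S0, q1 ≠ q2 →
      Disjoint ((descAt Q q1 1).filter (fun c => BadP Sink Q R k ℓ M c))
               ((descAt Q q2 1).filter (fun c => BadP Sink Q R k ℓ M c)) := by
    intro q1 hq1 q2 hq2 hne12
    rw [Finset.disjoint_left]
    intro c hc1 hc2
    rcases mem_descAt.1 (Finset.mem_filter.1 hc1).1 with ⟨_, hq1c, hlen1⟩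
    rcases mem_descAt.1 (Finset.mem_filter.1 hc2).1 with ⟨_, hq2c, hlen2⟩
    obtain ⟨_, _, hl1, _⟩ := hmemS0 q1 hq1
    obtain ⟨_, _, hl2, _⟩ := hmemS0 q2 hq2
    exact hne12 ((List.prefix_of_prefix_length_le hq1c hq2c (by omega)).eq_of_length (by omega))
  have hcard1 : (S0.biUnion (fun q => (descAt Q q 1).filter (fun c => BadP Sink Q R k ℓ M c))).card
      = ∑ q ∈ S0, ((descAt Q q 1).filter (fun c => BadP Sink Q R k ℓ M c)).card :=
    Finset.card_biUnion hdisj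
  have hlower : ∀ q ∈ S0, (k:ℝ)*(1 - 1/(2*(ℓ:ℝ))) ≤
      (((descAt Q q 1).filter (fun c => BadP Sink Q R k ℓ M c)).card : ℝ) := by
    intro q hq
    obtain ⟨hqQ, _, _, hbq, hqR, _⟩ := hmemS0 q hq
    exact (bad_not_R (hM q hqQ) hbq hqR (hdeg q hqQ)).2.le
  have hsum : (S0.card : ℝ) * ((k:ℝ)*(1 - 1/(2*(ℓ:ℝ)))) ≤
      ((S0.biUnion (fun q => (descAt Q q 1).filter (fun c => BadP Sink Q R k ℓ M c))).card : ℝ) := by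
    rw [hcard1]
    push_cast
    calc (S0.card : ℝ) * ((k:ℝ)*(1 - 1/(2*(ℓ:ℝ))))
        = ∑ _q ∈ S0, (k:ℝ)*(1 - 1/(2*(ℓ:ℝ))) := by rw [Finset.sum_const, nsmul_eq_mul]
      _ ≤ ∑ q ∈ S0, (((descAt Q q 1).filter (fun c => BadP Sink Q R k ℓ M c)).card : ℝ) :=
          Finset.sum_le_sum hlower
  have hS0card : (S0.card : ℝ) = ((T d).card:ℝ) - (((T d) ∩ R).card:ℝ) := by
    have := Finset.card_inter_add_card_sdiff (T d) R
    push_cast [← this]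
    ring
  have hfin : ((S0.biUnion (fun q => (descAt Q q 1).filter (fun c => BadP Sink Q R k ℓ M c))).card : ℝ)
      ≤ ((T (d+1)).card : ℝ) := by
    exact_mod_cast Finset.card_le_card hsub
  calc (k:ℝ)*(1 - 1/(2*(ℓ:ℝ))) * (((T d).card:ℝ) - (((T d) ∩ R).card:ℝ))
      = (S0.card : ℝ) * ((k:ℝ)*(1 - 1/(2*(ℓ:ℝ)))) := by rw [hS0card]; ring
    _ ≤ _ := le_trans hsum hfin

lemma Tset_zero {p : List V} (hpQ : p ∈ Q) (hb : BadP Sink Q R k ℓ M p) :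
    Tset Sink Q R k ℓ M p 0 = {p} := by
  ext x
  rw [mem_Tset, Finset.mem_singleton]
  constructor
  · rintro ⟨⟨hxQ, hpx, hxlen⟩, _⟩
    exact (hpx.eq_of_length (by omega)).symm
  · rintro rfl
    refine ⟨⟨hpQ, List.prefix_rfl, by omega⟩, hb, ?_⟩
    intro u h1 h2 h3 _
    exact absurd (h1.eq_of_length (le_antisymm h1.length_le h2.length_le)).symm h3

lemma Tset_subset_Dset (hne : ∀ p ∈ Q, p ≠ ([] : List V))
    (hpre : ∀ p ∈ Q, ∀ q : List V, q ≠ [] → q <+: p → q ∈ Q)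
    (hM : ∀ p ∈ Q, p.length ≤ M) {p : List V} (hpQ : p ∈ Q) (d : ℕ) :
    Tset Sink Q R k ℓ M p d ⊆ Dset Sink R Q p d := by
  intro x hx
  rcases mem_Tset.1 hx with ⟨⟨hxQ, hpx, hxlen⟩, _, hchain⟩
  refine mem_Dset.2 ⟨⟨hxQ, hpx, hxlen⟩, ?_⟩
  intro u h1 h2 h3 h4
  obtain ⟨hbu, huR⟩ := hchain u h1 h2 h3 h4
  have hune : u ≠ [] := by
    intro h; rw [h] at h1; exact hne p hpQ (List.prefix_nil.mp h1)
  have huQ : u ∈ Q := hpre x hxQ u hune h2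
  exact ⟨huR, open_of_bad_not_R (hM u huQ) hbu huR⟩

open Classical in
lemma Dset_card (hne : ∀ p ∈ Q, p ≠ ([] : List V))
    (hpre : ∀ p ∈ Q, ∀ q : List V, q ≠ [] → q <+: p → q ∈ Q)
    (hdeg : ∀ p ∈ Q, (∀ v, p.getLast? = some v → v ∉ Sink) → (descAt Q p 1).card = k)
    {p : List V} (hpQ : p ∈ Q) (hpR : p ∉ R)
    (hop : ∀ v, p.getLast? = some v → v ∉ Sink) :
    ∀ d, (Dset Sink R Q p d).card ≤ k^d := by
  intro d
  induction d with
  | zero =>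
    have : Dset Sink R Q p 0 ⊆ {p} := by
      intro x hx
      rcases mem_Dset.1 hx with ⟨⟨_, hpx, hxlen⟩, _⟩
      exact Finset.mem_singleton.2 (hpx.eq_of_length (by omega)).symm
    simpa using Finset.card_le_card this
  | succ d ih =>
    have hsub : Dset Sink R Q p (d+1) ⊆
        ((Dset Sink R Q p d).filter
          (fun u => u ∉ R ∧ ∀ v, u.getLast? = some v → v ∉ Sink)).biUnion
          (fun u => descAt Q u 1) := by
      intro x hx
      rcases mem_Dset.1 hx with ⟨⟨hxQ, hpx, hxlen⟩, hchain⟩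
      set u := x.take (p.length + d) with hu
      have hux : u <+: x := List.take_prefix _ _
      have hulen : u.length = p.length + d := by rw [hu, List.length_take]; omega
      have hpu : p <+: u := List.prefix_of_prefix_length_le hpx hux (by omega)
      have hune : u ≠ [] := by
        intro h; rw [h] at hpu; exact hne p hpQ (List.prefix_nil.mp hpu)
      have huQ : u ∈ Q := hpre x hxQ u hune hux
      have huD : u ∈ Dset Sink R Q p d := by
        refine mem_Dset.2 ⟨⟨huQ, hpu, hulen⟩, ?_⟩
        intro w h1 h2 h3 _
        refine hchain w h1 (h2.trans hux) h3 ?_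
        intro he; subst he
        have := h2.length_le; omega
      have huRop : u ∉ R ∧ (∀ v, u.getLast? = some v → v ∉ Sink) := by
        by_cases hup : u = p
        · rw [hup]; exact ⟨hpR, hop⟩
        · exact hchain u hpu hux hup (by intro he; rw [he] at hulen; omega)
      exact Finset.mem_biUnion.2 ⟨u, Finset.mem_filter.2 ⟨huD, huRop⟩,
        mem_descAt.2 ⟨hxQ, hux, by omega⟩⟩
    calc (Dset Sink R Q p (d+1)).card
        ≤ (((Dset Sink R Q p d).filter
            (fun u => u ∉ R ∧ ∀ v, u.getLast? = some v → v ∉ Sink)).biUnion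
            (fun u => descAt Q u 1)).card := Finset.card_le_card hsub
      _ ≤ ∑ u ∈ (Dset Sink R Q p d).filter
            (fun u => u ∉ R ∧ ∀ v, u.getLast? = some v → v ∉ Sink),
            (descAt Q u 1).card := Finset.card_biUnion_le
      _ ≤ ∑ _u ∈ (Dset Sink R Q p d).filter
            (fun u => u ∉ R ∧ ∀ v, u.getLast? = some v → v ∉ Sink), k := by
          apply Finset.sum_le_sum
          intro u hu
          rcases Finset.mem_filter.1 hu with ⟨huD, _, huop⟩
          rcases mem_Dset.1 huD with ⟨⟨huQ, _, _⟩, _⟩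
          exact le_of_eq (hdeg u huQ huop)
      _ = ((Dset Sink R Q p d).filter
            (fun u => u ∉ R ∧ ∀ v, u.getLast? = some v → v ∉ Sink)).card * k := by
          rw [Finset.sum_const, smul_eq_mul]
      _ ≤ (Dset Sink R Q p d).card * k :=
          Nat.mul_le_mul_right k (Finset.card_le_card (Finset.filter_subset _ _))
      _ ≤ k^d * k := Nat.mul_le_mul_right k ih
      _ = k^(d+1) := (pow_succ k d).symm

open Classical in
lemma fiber_card (hne : ∀ p ∈ Q, p ≠ ([] : List V))
    (hpre : ∀ p ∈ Q, ∀ q : List V, q ≠ [] → q <+: p → q ∈ Q)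
    (hM : ∀ p ∈ Q, p.length ≤ M)
    {p : List V} (hpQ : p ∈ Q) {d : ℕ}
    {F : Finset (List V)} (hF : F ⊆ Tset Sink Q R k ℓ M p ℓ \ R) :
    ∑ q ∈ F, ((Dset Sink R Q q d) ∩ R).card ≤ ((Dset Sink R Q p (ℓ+d)) ∩ R).card := by
  classical
  have hmemF : ∀ q ∈ F, q ∈ Q ∧ p <+: q ∧ q.length = p.length + ℓ ∧
      BadP Sink Q R k ℓ M q ∧ q ∉ R ∧
      (∀ u : List V, p <+: u → u <+: q → u ≠ p → u ≠ q →
        (BadP Sink Q R k ℓ M u ∧ u ∉ R)) := by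
    intro q hq
    rcases Finset.mem_sdiff.1 (hF hq) with ⟨hq1, hq2⟩
    rcases mem_Tset.1 hq1 with ⟨⟨h1, h2, h3⟩, h4, h5⟩
    exact ⟨h1, h2, h3, h4, hq2, h5⟩
  have hdisj : ∀ q1 ∈ F, ∀ q2 ∈ F, q1 ≠ q2 →
      Disjoint ((Dset Sink R Q q1 d) ∩ R) ((Dset Sink R Q q2 d) ∩ R) := by
    intro q1 hq1 q2 hq2 hne12
    rw [Finset.disjoint_left]
    intro x hx1 hx2
    rcases mem_Dset.1 (Finset.mem_inter.1 hx1).1 with ⟨⟨_, hq1x, hl1⟩, _⟩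
    rcases mem_Dset.1 (Finset.mem_inter.1 hx2).1 with ⟨⟨_, hq2x, hl2⟩, _⟩
    obtain ⟨_, _, hlen1, _⟩ := hmemF q1 hq1
    obtain ⟨_, _, hlen2, _⟩ := hmemF q2 hq2
    exact hne12 ((List.prefix_of_prefix_length_le hq1x hq2x (by omega)).eq_of_length (by omega))
  rw [← Finset.card_biUnion hdisj]
  apply Finset.card_le_card
  intro x hx
  rcases Finset.mem_biUnion.1 hx with ⟨q, hqF, hx⟩
  rcases Finset.mem_inter.1 hx with ⟨hxD, hxR⟩
  rcases mem_Dset.1 hxD with ⟨⟨hxQ, hqx, hxlen⟩, hchain⟩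
  obtain ⟨hqQ, hpq, hqlen, hbq, hqR, hqchain⟩ := hmemF q hqF
  refine Finset.mem_inter.2 ⟨mem_Dset.2 ⟨⟨hxQ, hpq.trans hqx, by omega⟩, ?_⟩, hxR⟩
  intro u h1 h2 h3 h4
  rcases lt_trichotomy u.length q.length with hlt | heq | hgt
  · have huq : u <+: q := List.prefix_of_prefix_length_le h2 hqx hlt.le
    have hune' : u ≠ q := by intro he; rw [he] at hlt; omega
    obtain ⟨hbu, huR⟩ := hqchain u h1 huq h3 hune'
    have hune : u ≠ [] := by
      intro h; rw [h] at h1; exact hne p hpQ (List.prefix_nil.mp h1)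
    have huQ : u ∈ Q := hpre q hqQ u hune huq
    exact ⟨huR, open_of_bad_not_R (hM u huQ) hbu huR⟩
  · have : u = q := (List.prefix_of_prefix_length_le h2 hqx heq.le).eq_of_length heq
    rw [this]
    exact ⟨hqR, open_of_bad_not_R (hM q hqQ) hbq hqR⟩
  · have hqu : q <+: u := List.prefix_of_prefix_length_le hqx h2 hgt.le
    exact hchain u hqu h2 (by intro he; rw [he] at hgt; omega) h4

open Classical in
lemma upper_bound (hne : ∀ p ∈ Q, p ≠ ([] : List V))
    (hpre : ∀ p ∈ Q, ∀ q : List V, q ≠ [] → q <+: p → q ∈ Q)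
    (hdeg : ∀ p ∈ Q, (∀ v, p.getLast? = some v → v ∉ Sink) → (descAt Q p 1).card = k)
    (hRfew : ∀ p ∈ Q, p ∉ R →
      (((descAt Q p ℓ) ∩ R).card : ℝ) ≤ (k:ℝ)^ℓ / (8*(ℓ:ℝ))^2)
    (hl1 : 1 ≤ ℓ)
    {p : List V} (hpQ : p ∈ Q) (hpR : p ∉ R)
    (hop : ∀ v, p.getLast? = some v → v ∉ Sink)
    {d : ℕ} (hd : 1 ≤ d) :
    (((Dset Sink R Q p (ℓ+d)) ∩ R).card : ℝ) ≤ (k:ℝ)^d * ((k:ℝ)^ℓ/(8*(ℓ:ℝ))^2) := by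
  classical
  have hsub : (Dset Sink R Q p (ℓ+d)) ∩ R ⊆
      ((Dset Sink R Q p d).filter (fun u => u ∉ R)).biUnion
        (fun u => (descAt Q u ℓ) ∩ R) := by
    intro x hx
    rcases Finset.mem_inter.1 hx with ⟨hxD, hxR⟩
    rcases mem_Dset.1 hxD with ⟨⟨hxQ, hpx, hxlen⟩, hchain⟩
    set u := x.take (p.length + d) with hu
    have hux : u <+: x := List.take_prefix _ _
    have hulen : u.length = p.length + d := by rw [hu, List.length_take]; omega
    have hpu : p <+: u := List.prefix_of_prefix_length_le hpx hux (by omega)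
    have hune : u ≠ [] := by
      intro h; rw [h] at hpu; exact hne p hpQ (List.prefix_nil.mp hpu)
    have huQ : u ∈ Q := hpre x hxQ u hune hux
    have hunep : u ≠ p := by intro he; rw [he] at hulen; omega
    have hunex : u ≠ x := by intro he; rw [he] at hulen; omega
    have huRop := hchain u hpu hux hunep hunex
    have huD : u ∈ Dset Sink R Q p d := by
      refine mem_Dset.2 ⟨⟨huQ, hpu, hulen⟩, ?_⟩
      intro w h1 h2 h3 _
      refine hchain w h1 (h2.trans hux) h3 ?_
      intro he; subst he
      have := h2.length_le; omega
    exact Finset.mem_biUnion.2 ⟨u, Finset.mem_filter.2 ⟨huD, huRop.1⟩,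
      Finset.mem_inter.2 ⟨mem_descAt.2 ⟨hxQ, hux, by omega⟩, hxR⟩⟩
  have h1 : ((Dset Sink R Q p (ℓ+d)) ∩ R).card ≤
      ∑ u ∈ (Dset Sink R Q p d).filter (fun u => u ∉ R), ((descAt Q u ℓ) ∩ R).card :=
    le_trans (Finset.card_le_card hsub) Finset.card_biUnion_le
  have h2 : (((Dset Sink R Q p (ℓ+d)) ∩ R).card : ℝ) ≤
      ∑ u ∈ (Dset Sink R Q p d).filter (fun u => u ∉ R), (((descAt Q u ℓ) ∩ R).card : ℝ) := by
    exact_mod_cast h1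
  have hb : (0:ℝ) ≤ (k:ℝ)^ℓ/(8*(ℓ:ℝ))^2 := by positivity
  calc (((Dset Sink R Q p (ℓ+d)) ∩ R).card : ℝ)
      ≤ ∑ u ∈ (Dset Sink R Q p d).filter (fun u => u ∉ R),
          (((descAt Q u ℓ) ∩ R).card : ℝ) := h2
    _ ≤ ∑ _u ∈ (Dset Sink R Q p d).filter (fun u => u ∉ R), (k:ℝ)^ℓ/(8*(ℓ:ℝ))^2 := by
        apply Finset.sum_le_sum
        intro u hu
        rcases Finset.mem_filter.1 hu with ⟨huD, huR⟩
        rcases mem_Dset.1 huD with ⟨⟨huQ, _, _⟩, _⟩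
        exact hRfew u huQ huR
    _ = (((Dset Sink R Q p d).filter (fun u => u ∉ R)).card : ℝ)
          * ((k:ℝ)^ℓ/(8*(ℓ:ℝ))^2) := by rw [Finset.sum_const, nsmul_eq_mul]
    _ ≤ (k:ℝ)^d * ((k:ℝ)^ℓ/(8*(ℓ:ℝ))^2) := by
        apply mul_le_mul_of_nonneg_right _ hb
        have hc1 : ((Dset Sink R Q p d).filter (fun u => u ∉ R)).card
            ≤ (Dset Sink R Q p d).card := Finset.card_le_card (Finset.filter_subset _ _)
        have hc2 := Dset_card (Sink := Sink) (R := R) hne hpre hdeg hpQ hpR hop d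
        have : ((Dset Sink R Q p d).filter (fun u => u ∉ R)).card ≤ k^d := le_trans hc1 hc2
        exact_mod_cast this

open Classical in
/-- Bottom-to-top pruning lemma. -/
theorem stmt4 {V : Type} [DecidableEq V] (Sink S : Set V) (k ℓ : ℕ) (hℓ : 7 ≤ ℓ)
    (Q R : Finset (List V)) (hR : R ⊆ Q)
    (hne : ∀ p ∈ Q, p ≠ ([] : List V))
    (hpre : ∀ p ∈ Q, ∀ q : List V, q ≠ [] → q <+: p → q ∈ Q)
    (hsrc : ∀ s ∈ S, [s] ∈ Q)
    (hdeg : ∀ p ∈ Q, (∀ v, p.getLast? = some v → v ∉ Sink) → (descAt Q p 1).card = k)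
    (hRfew : ∀ p ∈ Q, p ∉ R →
      (((descAt Q p ℓ) ∩ R).card : ℝ) ≤ (k:ℝ)^ℓ / (8*(ℓ:ℝ))^2) :
    ∃ Q' : Finset (List V), Q' ⊆ Q \ R ∧
      (∀ p ∈ Q', (∀ v, p.getLast? = some v → v ∉ Sink) →
        (k:ℝ)/(2*(ℓ:ℝ)) ≤ ((descAt Q' p 1).card : ℝ)) ∧
      (∀ s ∈ S,
        (∀ ℓ' ≤ ℓ, (((descAt Q [s] ℓ') ∩ R).card : ℝ) ≤ (k:ℝ)^ℓ' / (8*(ℓ:ℝ))) →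
        [s] ∈ Q') := by
  classical
  set M := Q.sup List.length with hMdef
  have hM : ∀ p ∈ Q, p.length ≤ M := fun p hp => Finset.le_sup hp
  have hl7 : (7:ℝ) ≤ (ℓ:ℝ) := by exact_mod_cast hℓ
  have hlpos : (0:ℝ) < (ℓ:ℝ) := by linarith
  have hl1 : 1 ≤ ℓ := by omega
  have key : ∀ n : ℕ, ∀ p : List V, p ∈ Q → M - p.length < n →
      BadP Sink Q R k ℓ M p → p ∉ R →
      ∃ d, 1 ≤ d ∧ d ≤ ℓ ∧
        (k:ℝ)^d/(8*(ℓ:ℝ)) < (((Dset Sink R Q p d) ∩ R).card : ℝ) := by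
    intro n
    induction n with
    | zero => intro p _ h _ _; exact absurd h (Nat.not_lt_zero _)
    | succ n ih =>
      intro p hpQ hn hbad hpR
      by_contra hno
      push_neg at hno
      obtain ⟨hop, hbadch⟩ := bad_not_R (hM p hpQ) hbad hpR (hdeg p hpQ)
      have hfle : (((descAt Q p 1).filter (fun q => BadP Sink Q R k ℓ M q)).card : ℝ)
          ≤ (k:ℝ) := by
        have h1 : ((descAt Q p 1).filter (fun q => BadP Sink Q R k ℓ M q)).card ≤ k := by
          rw [← hdeg p hpQ hop]
          exact Finset.card_le_card (Finset.filter_subset _ _)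
        exact_mod_cast h1
      have h2l0 : (0:ℝ) < 2*(ℓ:ℝ) := by linarith
      have hk0 : (0:ℝ) < (k:ℝ) := by
        by_contra hk
        push_neg at hk
        have h2l : (0:ℝ) < 1/(2*(ℓ:ℝ)) := by positivity
        nlinarith
      have hkl : (0:ℝ) < (k:ℝ)^ℓ := pow_pos hk0 ℓ
      set β : ℝ := 1 - 1/(2*(ℓ:ℝ)) with hβ
      have hinv : (0:ℝ) < 1/(2*(ℓ:ℝ)) := by positivity
      have hinv1 : 1/(2*(ℓ:ℝ)) ≤ 1 := by
        rw [div_le_one h2l0]; linarith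
      have hβ0 : (0:ℝ) ≤ β := by rw [hβ]; linarith
      have hβ1 : β ≤ 1 := by rw [hβ]; linarith
      have hTDR : ∀ d, d ≤ ℓ →
          (((Tset Sink Q R k ℓ M p d) ∩ R).card : ℝ) ≤ (k:ℝ)^d/(8*(ℓ:ℝ)) := by
        intro d hd
        rcases Nat.eq_zero_or_pos d with rfl | hd1
        · rw [Tset_zero hpQ hbad, Finset.singleton_inter_of_notMem hpR]
          simp
        · have hsub := Finset.inter_subset_inter
            (Tset_subset_Dset (Sink := Sink) (Q := Q) (R := R) (k := k) (ℓ := ℓ) (M := M) hne hpre hM hpQ d) (subset_refl R)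
          have h1 : (((Tset Sink Q R k ℓ M p d) ∩ R).card : ℝ) ≤
              (((Dset Sink R Q p d) ∩ R).card : ℝ) := by
            exact_mod_cast Finset.card_le_card hsub
          exact le_trans h1 (hno d hd1 hd)
      have hTbound : ∀ d, d ≤ ℓ →
          (k:ℝ)^d * (β^d - (d:ℝ)/(8*(ℓ:ℝ))) ≤ ((Tset Sink Q R k ℓ M p d).card : ℝ) := by
        intro d
        induction d with
        | zero =>
          intro _
          rw [Tset_zero hpQ hbad]
          simp
        | succ d ihd =>
          intro hd
          have hdl : d ≤ ℓ := by omega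
          have h1 := Tstep (Sink := Sink) (Q := Q) (R := R) (k := k) (ℓ := ℓ) (M := M)
            hM hdeg p d
          have h2 := ihd hdl
          have h3 := hTDR d hdl
          have hkd : (0:ℝ) ≤ (k:ℝ)^d := by positivity
          have hkβ : (0:ℝ) ≤ (k:ℝ)*β := mul_nonneg hk0.le hβ0
          have h4 : (k:ℝ)*β * ((k:ℝ)^d * (β^d - (d:ℝ)/(8*(ℓ:ℝ))) - (k:ℝ)^d/(8*(ℓ:ℝ)))
              ≤ ((Tset Sink Q R k ℓ M p (d+1)).card : ℝ) := by
            refine le_trans ?_ h1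
            exact mul_le_mul_of_nonneg_left (sub_le_sub h2 h3) hkβ
          refine le_trans ?_ h4
          have e1 : (k:ℝ)^(d+1) = (k:ℝ)^d * (k:ℝ) := pow_succ _ _
          have e2 : β^(d+1) = β^d * β := pow_succ _ _
          have hc : (0:ℝ) ≤ 1/(8*(ℓ:ℝ)) := by positivity
          have hP : (0:ℝ) ≤ ((k:ℝ)^d * (k:ℝ)) * (((d:ℝ)+1) * (1/(8*(ℓ:ℝ)))) * (1 - β) := by
            apply mul_nonneg
            apply mul_nonneg (mul_nonneg hkd hk0.le)
            · positivity
            · linarith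
          push_cast
          rw [e1, e2]
          have hQ : (k:ℝ)^d*(k:ℝ)*(β^d*β - ((d:ℝ)+1)/(8*(ℓ:ℝ))) =
              (k:ℝ)*β*((k:ℝ)^d*(β^d - (d:ℝ)/(8*(ℓ:ℝ))) - (k:ℝ)^d/(8*(ℓ:ℝ)))
              - ((k:ℝ)^d * (k:ℝ)) * (((d:ℝ)+1) * (1/(8*(ℓ:ℝ)))) * (1 - β) := by
            ring
          linarith [hP, hQ]
      have hβl : (1/2:ℝ) ≤ β^ℓ := by
        have hm2 : (-2:ℝ) ≤ -(1/(2*(ℓ:ℝ))) := by linarith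
        have h := one_add_mul_le_pow hm2 ℓ
        have he : 1 + (ℓ:ℝ) * (-(1/(2*(ℓ:ℝ)))) = 1/2 := by field_simp; ring
        have he2 : (1 + -(1/(2*(ℓ:ℝ)))) = β := by rw [hβ]; ring
        rw [he, he2] at h
        exact h
      set X := Tset Sink Q R k ℓ M p ℓ \ R with hX
      have hXc : (X.card : ℝ) = ((Tset Sink Q R k ℓ M p ℓ).card:ℝ)
          - (((Tset Sink Q R k ℓ M p ℓ) ∩ R).card:ℝ) := by
        have := Finset.card_inter_add_card_sdiff (Tset Sink Q R k ℓ M p ℓ) R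
        push_cast [← this]
        ring
      have hX1 : (k:ℝ)^ℓ * (5/14) ≤ (X.card:ℝ) := by
        have h1 := hTbound ℓ le_rfl
        have h2 := hTDR ℓ le_rfl
        have hll : (ℓ:ℝ)/(8*(ℓ:ℝ)) = 1/8 := by field_simp
        rw [hll] at h1
        have h56 : (56:ℝ) ≤ 8*(ℓ:ℝ) := by linarith
        have h8l : (k:ℝ)^ℓ/(8*(ℓ:ℝ)) ≤ (k:ℝ)^ℓ/56 :=
          div_le_div_of_nonneg_left hkl.le (by norm_num) h56
        have hmul : (k:ℝ)^ℓ * (1/2 - 1/8) ≤ (k:ℝ)^ℓ * (β^ℓ - 1/8) := by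
          apply mul_le_mul_of_nonneg_left _ hkl.le
          linarith
        rw [hXc]
        nlinarith
      have hXpos : X.Nonempty := by
        rw [← Finset.card_pos]
        by_contra hc
        push_neg at hc
        have h0 : X.card = 0 := by omega
        rw [h0] at hX1
        norm_num at hX1
        nlinarith
      have hch : ∀ q : List V, ∃ d : ℕ, q ∈ X → (1 ≤ d ∧ d ≤ ℓ ∧
          (k:ℝ)^d/(8*(ℓ:ℝ)) < (((Dset Sink R Q q d) ∩ R).card : ℝ)) := by
        intro q
        by_cases hq : q ∈ X
        · rcases Finset.mem_sdiff.1 hq with ⟨hq1, hq2⟩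
          rcases mem_Tset.1 hq1 with ⟨⟨hqQ, _, hqlen⟩, hbq, _⟩
          have hqM := hM q hqQ
          obtain ⟨d, hd⟩ := ih q hqQ (by omega) hbq hq2
          exact ⟨d, fun _ => hd⟩
        · exact ⟨1, fun h' => absurd h' hq⟩
      choose g hg using hch
      have hgmem : ∀ q ∈ X, g q ∈ Finset.Icc 1 ℓ := fun q hq =>
        Finset.mem_Icc.2 ⟨(hg q hq).1, (hg q hq).2.1⟩
      have hlow : (X.card : ℝ) * (1/(8*(ℓ:ℝ))) <
          ∑ q ∈ X, (((Dset Sink R Q q (g q)) ∩ R).card : ℝ) / (k:ℝ)^(g q) := by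
        calc (X.card : ℝ) * (1/(8*(ℓ:ℝ))) = ∑ _q ∈ X, 1/(8*(ℓ:ℝ)) := by
              rw [Finset.sum_const, nsmul_eq_mul]
          _ < ∑ q ∈ X, (((Dset Sink R Q q (g q)) ∩ R).card : ℝ) / (k:ℝ)^(g q) := by
              apply Finset.sum_lt_sum_of_nonempty hXpos
              intro q hq
              have h1 := (hg q hq).2.2
              have hkgq : (0:ℝ) < (k:ℝ)^(g q) := pow_pos hk0 _
              rw [lt_div_iff₀ hkgq]
              calc 1/(8*(ℓ:ℝ)) * (k:ℝ)^(g q) = (k:ℝ)^(g q)/(8*(ℓ:ℝ)) := by ring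
                _ < _ := h1
      have hfib : ∑ q ∈ X, (((Dset Sink R Q q (g q)) ∩ R).card : ℝ) / (k:ℝ)^(g q)
          = ∑ d ∈ Finset.Icc 1 ℓ, ∑ q ∈ X.filter (fun q => g q = d),
              (((Dset Sink R Q q (g q)) ∩ R).card : ℝ) / (k:ℝ)^(g q) :=
        (Finset.sum_fiberwise_of_maps_to hgmem _).symm
      have hupper : ∀ d ∈ Finset.Icc 1 ℓ,
          ∑ q ∈ X.filter (fun q => g q = d),
              (((Dset Sink R Q q (g q)) ∩ R).card : ℝ) / (k:ℝ)^(g q)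
          ≤ (k:ℝ)^ℓ/(8*(ℓ:ℝ))^2 := by
        intro d hd
        rcases Finset.mem_Icc.1 hd with ⟨hd1, hd2⟩
        have hstep1 : ∑ q ∈ X.filter (fun q => g q = d),
            (((Dset Sink R Q q (g q)) ∩ R).card : ℝ) / (k:ℝ)^(g q)
            = ((∑ q ∈ X.filter (fun q => g q = d),
                ((Dset Sink R Q q d) ∩ R).card : ℕ) : ℝ) / (k:ℝ)^d := by
          push_cast
          rw [Finset.sum_div]
          apply Finset.sum_congr rfl
          intro q hq
          rw [(Finset.mem_filter.1 hq).2]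
        rw [hstep1]
        have hsum1 : ∑ q ∈ X.filter (fun q => g q = d), ((Dset Sink R Q q d) ∩ R).card
            ≤ ((Dset Sink R Q p (ℓ+d)) ∩ R).card :=
          fiber_card (Sink := Sink) (Q := Q) (R := R) (k := k) (ℓ := ℓ) (M := M)
            hne hpre hM hpQ (Finset.filter_subset _ _)
        have hup := upper_bound (Sink := Sink) (Q := Q) (R := R) (k := k) (ℓ := ℓ)
          hne hpre hdeg hRfew hl1 hpQ hpR hop hd1
        have hkd : (0:ℝ) < (k:ℝ)^d := pow_pos hk0 _
        rw [div_le_iff₀ hkd]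
        calc ((∑ q ∈ X.filter (fun q => g q = d), ((Dset Sink R Q q d) ∩ R).card : ℕ) : ℝ)
            ≤ (((Dset Sink R Q p (ℓ+d)) ∩ R).card : ℝ) := by exact_mod_cast hsum1
          _ ≤ (k:ℝ)^d * ((k:ℝ)^ℓ/(8*(ℓ:ℝ))^2) := hup
          _ = (k:ℝ)^ℓ/(8*(ℓ:ℝ))^2 * (k:ℝ)^d := by ring
      have hIcc : (Finset.Icc 1 ℓ).card = ℓ := by rw [Nat.card_Icc]; omega
      have htot : ∑ q ∈ X, (((Dset Sink R Q q (g q)) ∩ R).card : ℝ) / (k:ℝ)^(g q)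
          ≤ (ℓ:ℝ) * ((k:ℝ)^ℓ/(8*(ℓ:ℝ))^2) := by
        rw [hfib]
        calc (∑ d ∈ Finset.Icc 1 ℓ, ∑ q ∈ X.filter (fun q => g q = d),
              (((Dset Sink R Q q (g q)) ∩ R).card : ℝ) / (k:ℝ)^(g q))
            ≤ ∑ _d ∈ Finset.Icc 1 ℓ, (k:ℝ)^ℓ/(8*(ℓ:ℝ))^2 := Finset.sum_le_sum hupper
          _ = ((Finset.Icc 1 ℓ).card : ℝ) * ((k:ℝ)^ℓ/(8*(ℓ:ℝ))^2) := by
              rw [Finset.sum_const, nsmul_eq_mul]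
          _ = (ℓ:ℝ) * ((k:ℝ)^ℓ/(8*(ℓ:ℝ))^2) := by rw [hIcc]
      have hcomb : (X.card : ℝ) * (1/(8*(ℓ:ℝ))) < (ℓ:ℝ) * ((k:ℝ)^ℓ/(8*(ℓ:ℝ))^2) :=
        lt_of_lt_of_le hlow htot
      have h8lpos : (0:ℝ) < 8*(ℓ:ℝ) := by linarith
      have hid : (ℓ:ℝ) * ((k:ℝ)^ℓ/(8*(ℓ:ℝ))^2) * (8*(ℓ:ℝ)) = (k:ℝ)^ℓ/8 := by
        field_simp
      have hXlt : (X.card : ℝ) < (k:ℝ)^ℓ/8 := by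
        have hm := mul_lt_mul_of_pos_right hcomb h8lpos
        rw [hid] at hm
        calc (X.card : ℝ) = (X.card : ℝ) * (1/(8*(ℓ:ℝ))) * (8*(ℓ:ℝ)) := by field_simp
          _ < _ := hm
      linarith
  refine ⟨Q.filter (fun p => ¬ BadP Sink Q R k ℓ M p), ?_, ?_, ?_⟩
  · intro p hp
    rcases Finset.mem_filter.1 hp with ⟨hpQ, hnb⟩
    exact Finset.mem_sdiff.2 ⟨hpQ, fun hR' => hnb (badP_of_mem_R hR')⟩
  · intro p hp hop
    rcases Finset.mem_filter.1 hp with ⟨hpQ, hnb⟩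
    rw [badP_iff (hM p hpQ)] at hnb
    push_neg at hnb
    obtain ⟨hpR, h2⟩ := hnb
    have h3 := h2 hop
    have hset2 : descAt (Q.filter (fun p => ¬ BadP Sink Q R k ℓ M p)) p 1
        = (descAt Q p 1).filter (fun q => ¬ BadP Sink Q R k ℓ M q) := by
      ext q
      simp only [descAt, Finset.mem_filter]
      tauto
    rw [hset2]
    exact h3
  · intro s hs hsle
    have hsQ : [s] ∈ Q := hsrc s hs
    refine Finset.mem_filter.2 ⟨hsQ, ?_⟩
    intro hbad
    have hsR : [s] ∉ R := by
      intro hsR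
      have hmem : [s] ∈ (descAt Q [s] 0 ∩ R) :=
        Finset.mem_inter.2 ⟨mem_descAt.2 ⟨hsQ, List.prefix_rfl, by simp⟩, hsR⟩
      have h1 : (1:ℝ) ≤ ((descAt Q [s] 0 ∩ R).card : ℝ) := by
        have := Finset.card_pos.2 ⟨_, hmem⟩
        exact_mod_cast this
      have h2 := hsle 0 (Nat.zero_le _)
      rw [pow_zero] at h2
      have h3 : (1:ℝ)/(8*(ℓ:ℝ)) < 1 := by
        rw [div_lt_one (by linarith)]
        linarith
      linarith
    obtain ⟨d, hd1, hdl, hgt⟩ := key (M + 1) [s] hsQ (by omega) hbad hsR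
    have hle' := hsle d hdl
    have hsub : (Dset Sink R Q [s] d ∩ R) ⊆ (descAt Q [s] d ∩ R) := by
      intro x hx
      rcases Finset.mem_inter.1 hx with ⟨h1, h2⟩
      rcases mem_Dset.1 h1 with ⟨h3, _⟩
      exact Finset.mem_inter.2 ⟨mem_descAt.2 h3, h2⟩
    have h4 : ((Dset Sink R Q [s] d ∩ R).card : ℝ) ≤ ((descAt Q [s] d ∩ R).card : ℝ) := by
      exact_mod_cast Finset.card_le_card hsub
    linarith
end
end

section
/- Layered tree pruning: Let T be a rooted tree of depth h where every internal vertex has exactly k' children (k' a positive integer divisible by 4), all leaves at depth h. Let R be a set of vertices of T such that for every i, at most (k'/4)^i vertices of R are at depth i, and the root is not in R. Then there exists a subtree T' of T containing the root and avoiding R in which every vertex at depth < h has at least k'/4 children, and every leaf of T' is at depth h. (Proof: prune bottom-to-top, removing vertices in R and vertices that lost more than (3/4)k' children; at each depth i at most (k'/2)^i vertices are removed.) -/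
/-- The children of `v` (excluding the root). -/
def stmt9children {V : Type} [Fintype V] [DecidableEq V]
    (parent : V → V) (root : V) (v : V) : Finset V :=
  Finset.univ.filter (fun u => parent u = v ∧ u ≠ root)

/-- Bad vertices at depth `h - j`, defined by recursion from the bottom layer. -/
def stmt9bad {V : Type} [Fintype V] [DecidableEq V]
    (parent : V → V) (root : V) (depth : V → ℕ) (R : Finset V) (h m : ℕ) : ℕ → Finset V
  | 0 => R.filter (fun v => depth v = h)
  | j+1 => Finset.univ.filter (fun v => depth v = h - (j+1) ∧
      (v ∈ R ∨ 3*m < ((stmt9children parent root v) ∩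
        stmt9bad parent root depth R h m j).card))

/-- Good vertices selected level by level from the root. -/
def stmt9lvl {V : Type} [Fintype V] [DecidableEq V]
    (parent : V → V) (root : V) (depth : V → ℕ) (R : Finset V) (h m : ℕ) : ℕ → Finset V
  | 0 => {root}
  | d+1 => Finset.univ.filter (fun u => parent u ∈ stmt9lvl parent root depth R h m d ∧
      u ≠ root ∧ u ∉ stmt9bad parent root depth R h m (h - depth u))

lemma stmt9bad_card {V : Type} [Fintype V] [DecidableEq V]
    (parent : V → V) (root : V) (depth : V → ℕ) (R : Finset V) (h m : ℕ)
    (hm : 0 < m)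
    (hsmall : ∀ i, (R.filter (fun v => depth v = i)).card ≤ m ^ i) :
    ∀ j, (stmt9bad parent root depth R h m j).card ≤ 2 * m ^ (h - j) := by
  intro j
  induction j with
  | zero =>
    calc (stmt9bad parent root depth R h m 0).card ≤ m ^ h := hsmall h
      _ ≤ 2 * m ^ (h - 0) := by simp; omega
  | succ j ih =>
    set B := stmt9bad parent root depth R h m j with hB
    set Loss := Finset.univ.filter (fun v : V => depth v = h - (j+1) ∧
        3*m < ((stmt9children parent root v) ∩ B).card) with hLoss
    have hsub : stmt9bad parent root depth R h m (j+1) ⊆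
        (R.filter (fun v => depth v = h - (j+1))) ∪ Loss := by
      intro v hv
      simp only [stmt9bad, Finset.mem_filter, Finset.mem_univ, true_and] at hv
      rcases hv with ⟨hd, hvR | hvc⟩
      · exact Finset.mem_union_left _ (Finset.mem_filter.mpr ⟨hvR, hd⟩)
      · exact Finset.mem_union_right _ (by simp [hLoss, hd, hvc, hB])
    have hdisj : ∀ x ∈ Loss, ∀ y ∈ Loss, x ≠ y →
        Disjoint ((stmt9children parent root x) ∩ B) ((stmt9children parent root y) ∩ B) := by
      intro x _ y _ hxy
      rw [Finset.disjoint_left]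
      intro u hux huy
      simp only [stmt9children, Finset.mem_inter, Finset.mem_filter, Finset.mem_univ,
        true_and] at hux huy
      exact hxy (hux.1.1 ▸ huy.1.1 ▸ rfl)
    have hsum : Loss.card * (3*m+1) ≤ B.card := by
      have h1 : Loss.card * (3*m+1) ≤ ∑ v ∈ Loss, ((stmt9children parent root v) ∩ B).card := by
        rw [← Finset.sum_const_nat (m := 3*m+1) (fun x _ => rfl)]
        exact Finset.sum_le_sum (fun v hv => by
          have := (Finset.mem_filter.mp hv).2.2
          omega)
      have h2 : ∑ v ∈ Loss, ((stmt9children parent root v) ∩ B).card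
          = (Loss.biUnion (fun v => (stmt9children parent root v) ∩ B)).card :=
        (Finset.card_biUnion hdisj).symm
      have h3 : Loss.biUnion (fun v => (stmt9children parent root v) ∩ B) ⊆ B := by
        intro u hu
        rcases Finset.mem_biUnion.mp hu with ⟨v, _, hv⟩
        exact (Finset.mem_inter.mp hv).2
      calc Loss.card * (3*m+1) ≤ _ := h1
        _ = _ := h2
        _ ≤ B.card := Finset.card_le_card h3
    have hpow : 2 * m ^ (h - j) ≤ (3*m+1) * m ^ (h - (j+1)) := by
      have hle' : m ^ (h - j) ≤ m ^ (h - (j+1) + 1) :=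
        Nat.pow_le_pow_right hm (by omega)
      have : m ^ (h - (j+1) + 1) = m * m ^ (h - (j+1)) := by ring
      nlinarith [pow_pos hm (h - (j+1))]
    have hLosscard : Loss.card ≤ m ^ (h - (j+1)) := by
      have : Loss.card * (3*m+1) ≤ (3*m+1) * m ^ (h - (j+1)) := le_trans hsum (le_trans ih hpow)
      nlinarith
    calc (stmt9bad parent root depth R h m (j+1)).card
        ≤ ((R.filter (fun v => depth v = h - (j+1))) ∪ Loss).card := Finset.card_le_card hsub
      _ ≤ (R.filter (fun v => depth v = h - (j+1))).card + Loss.card := Finset.card_union_le _ _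
      _ ≤ m ^ (h - (j+1)) + m ^ (h - (j+1)) := Nat.add_le_add (hsmall _) hLosscard
      _ = 2 * m ^ (h - (j+1)) := by ring

lemma stmt9lvl_depth {V : Type} [Fintype V] [DecidableEq V]
    (parent : V → V) (root : V) (depth : V → ℕ) (R : Finset V) (h m : ℕ)
    (hroot : depth root = 0)
    (hdepth : ∀ v, v ≠ root → depth (parent v) + 1 = depth v) :
    ∀ d, ∀ v ∈ stmt9lvl parent root depth R h m d, depth v = d := by
  intro d
  induction d with
  | zero => intro v hv; simp only [stmt9lvl, Finset.mem_singleton] at hv; simpa [hv]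
  | succ d ih =>
    intro v hv
    simp only [stmt9lvl, Finset.mem_filter, Finset.mem_univ, true_and] at hv
    have := hdepth v hv.2.1
    have := ih _ hv.1
    omega

/-- Layered tree pruning: in a complete k'-ary tree of depth h, removing a set R with at
most (k'/4)^i vertices at each depth i still leaves a root subtree avoiding R in which
every non-bottom vertex keeps at least k'/4 children and all leaves are at depth h. -/
theorem stmt9 {V : Type} [Fintype V] [DecidableEq V]
    (root : V) (parent : V → V) (depth : V → ℕ) (h k' : ℕ)
    (hk' : 0 < k') (hdvd : 4 ∣ k')
    (hroot : depth root = 0)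
    (hdepth : ∀ v, v ≠ root → depth (parent v) + 1 = depth v)
    (hle : ∀ v, depth v ≤ h)
    (hchild : ∀ v : V, depth v < h →
      (Finset.univ.filter (fun u => parent u = v ∧ u ≠ root)).card = k')
    (R : Finset V) (hrootR : root ∉ R)
    (hsmall : ∀ i, (R.filter (fun v => depth v = i)).card ≤ (k'/4)^i) :
    ∃ T' : Finset V, root ∈ T' ∧
      (∀ v ∈ T', v ≠ root → parent v ∈ T') ∧
      (∀ v ∈ T', v ∉ R) ∧
      (∀ v ∈ T', depth v < h →
        k'/4 ≤ ((Finset.univ.filter (fun u => parent u = v ∧ u ≠ root)) ∩ T').card) ∧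
      (∀ v ∈ T', depth v < h → ∃ u ∈ T', parent u = v ∧ u ≠ root) := by
  set m := k' / 4 with hmdef
  have hk4 : k' = 4 * m := (Nat.mul_div_cancel' hdvd).symm
  have hm : 0 < m := by omega
  set L := stmt9lvl parent root depth R h m with hLdef
  set B := stmt9bad parent root depth R h m with hBdef
  have hBcard : ∀ j, (B j).card ≤ 2 * m ^ (h - j) :=
    stmt9bad_card parent root depth R h m hm hsmall
  have hLdepth : ∀ d, ∀ v ∈ L d, depth v = d :=
    stmt9lvl_depth parent root depth R h m hroot hdepth
  set T' := (Finset.range (h+1)).biUnion L with hT'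
  have hrootT : root ∈ T' := by
    apply Finset.mem_biUnion.mpr
    exact ⟨0, by simp, by simp [hLdef, stmt9lvl]⟩
  -- key: bounded number of bad children for any vertex in T' of depth < h
  have hkey : ∀ v ∈ T', depth v < h →
      ((stmt9children parent root v) ∩ B (h - depth v - 1)).card ≤ 3*m := by
    intro v hv hvh
    rcases Finset.mem_biUnion.mp hv with ⟨d, hd, hvL⟩
    have hdv : depth v = d := hLdepth d v hvL
    cases d with
    | zero =>
      have h1 : ((stmt9children parent root v) ∩ B (h - depth v - 1)).card
          ≤ (B (h - depth v - 1)).card :=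
        Finset.card_le_card (Finset.inter_subset_right)
      have h2 := hBcard (h - depth v - 1)
      have h3 : h - (h - depth v - 1) = 1 := by omega
      rw [h3] at h2
      simp at h2
      omega
    | succ e =>
      simp only [hLdef, stmt9lvl, Finset.mem_filter, Finset.mem_univ, true_and] at hvL
      have hnb := hvL.2.2
      have heq : h - depth v = (h - depth v - 1) + 1 := by omega
      rw [heq] at hnb
      by_contra hc
      push_neg at hc
      apply hnb
      simp only [hBdef, stmt9bad, Finset.mem_filter, Finset.mem_univ, true_and]
      exact ⟨by omega, Or.inr hc⟩
  have hmain : ∀ v ∈ T', depth v < h →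
      m ≤ ((Finset.univ.filter (fun u => parent u = v ∧ u ≠ root)) ∩ T').card := by
    intro v hv hvh
    rcases Finset.mem_biUnion.mp hv with ⟨d, hd, hvL⟩
    have hdv : depth v = d := hLdepth d v hvL
    have hbadle := hkey v hv hvh
    have hsub2 : (stmt9children parent root v) \ B (h - depth v - 1) ⊆
        (Finset.univ.filter (fun u => parent u = v ∧ u ≠ root)) ∩ T' := by
      intro u hu
      rcases Finset.mem_sdiff.mp hu with ⟨hu1, hu2⟩
      simp only [stmt9children, Finset.mem_filter, Finset.mem_univ, true_and] at hu1
      have hud : depth u = d + 1 := by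
        have := hdepth u hu1.2
        rw [hu1.1] at this
        omega
      apply Finset.mem_inter.mpr
      refine ⟨by simp [hu1.1, hu1.2], ?_⟩
      apply Finset.mem_biUnion.mpr
      refine ⟨d+1, by simp; omega, ?_⟩
      simp only [hLdef, stmt9lvl, Finset.mem_filter, Finset.mem_univ, true_and]
      refine ⟨by rw [hu1.1]; exact hvL, hu1.2, ?_⟩
      have : h - depth u = h - depth v - 1 := by omega
      rw [this]
      exact hu2
    have hcards : k' ≤ ((stmt9children parent root v) \ B (h - depth v - 1)).card +
        ((stmt9children parent root v) ∩ B (h - depth v - 1)).card := by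
      rw [Finset.card_sdiff_add_card_inter]
      have : (stmt9children parent root v).card = k' := hchild v hvh
      omega
    have := Finset.card_le_card hsub2
    omega
  refine ⟨T', hrootT, ?_, ?_, ?_, ?_⟩
  · -- closed under parent
    intro v hv hvroot
    rcases Finset.mem_biUnion.mp hv with ⟨d, hd, hvL⟩
    cases d with
    | zero => simp only [hLdef, stmt9lvl, Finset.mem_singleton] at hvL; exact absurd hvL hvroot
    | succ e =>
      simp only [hLdef, stmt9lvl, Finset.mem_filter, Finset.mem_univ, true_and] at hvL
      apply Finset.mem_biUnion.mpr
      exact ⟨e, by simp at hd ⊢; omega, hvL.1⟩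
  · -- avoids R
    intro v hv
    rcases Finset.mem_biUnion.mp hv with ⟨d, hd, hvL⟩
    have hdv : depth v = d := hLdepth d v hvL
    cases d with
    | zero =>
      simp only [hLdef, stmt9lvl, Finset.mem_singleton] at hvL
      rw [hvL]; exact hrootR
    | succ e =>
      simp only [hLdef, stmt9lvl, Finset.mem_filter, Finset.mem_univ, true_and] at hvL
      intro hvR
      apply hvL.2.2
      rcases Nat.lt_or_ge (depth v) h with hlt | hge
      · have heq : h - depth v = (h - depth v - 1) + 1 := by omega
        rw [heq]
        simp only [hBdef, stmt9bad, Finset.mem_filter, Finset.mem_univ, true_and]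
        exact ⟨by omega, Or.inl hvR⟩
      · have hdh : depth v = h := le_antisymm (hle v) hge
        have : h - depth v = 0 := by omega
        rw [this]
        simp only [hBdef, stmt9bad, Finset.mem_filter]
        exact ⟨hvR, hdh⟩
  · -- child count
    intro v hv hvh
    rw [hmdef] at hmain
    exact hmain v hv hvh
  · -- nonempty children
    intro v hv hvh
    have := hmain v hv hvh
    have hne : ((Finset.univ.filter (fun u => parent u = v ∧ u ≠ root)) ∩ T').Nonempty := by
      apply Finset.card_pos.mp; omega
    rcases hne with ⟨u, hu⟩
    rcases Finset.mem_inter.mp hu with ⟨hu1, hu2⟩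
    simp only [Finset.mem_filter, Finset.mem_univ, true_and] at hu1
    exact ⟨u, hu2, hu1.1, hu1.2⟩
end

section
/- Let h ≥ 2 be an integer and let p₀, p₁, …, p_h ∈ [0,1] satisfy p_j ≤ 1 − exp(−p_{j+1}) for all 0 ≤ j ≤ h−1. Then p_j ≤ 2/(h−j) for all 0 ≤ j ≤ h−2. In particular p₀ ≤ 2/h. -/
lemma key_ineq (m : ℝ) (hm : 2 ≤ m) : 1 - Real.exp (-(2/m)) ≤ 2/(m+1) := by
  have hm0 : (0:ℝ) < m := by linarith
  set t : ℝ := 2/m with ht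
  have ht0 : 0 < t := by positivity
  have ht1 : t ≤ 1 := by
    rw [ht, div_le_one hm0]; linarith
  have habs : |(-t)| ≤ 1 := by rw [abs_neg, abs_of_pos ht0]; exact ht1
  have hb := Real.exp_bound habs (n := 5) (by norm_num)
  have hsum : ∑ i ∈ Finset.range 5, (-t) ^ i / (Nat.factorial i : ℝ)
      = 1 - t + t^2/2 - t^3/6 + t^4/24 := by
    simp [Finset.sum_range_succ, Nat.factorial]
    ring
  rw [hsum] at hb
  have habs5 : |(-t)| ^ 5 = t^5 := by rw [abs_neg, abs_of_pos ht0]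
  rw [habs5] at hb
  have hlow : 1 - t + t^2/2 - t^3/6 + t^4/24 - t^5 * (6 / (120 * 5))
      ≤ Real.exp (-t) := by
    have := (abs_sub_le_iff.1 hb).2
    norm_num [Nat.factorial] at this ⊢
    linarith
  -- goal: 1 - exp(-t) ≤ 2/(m+1)
  have hm1 : (0:ℝ) < m + 1 := by linarith
  rw [sub_le_iff_le_add]
  rw [div_add' _ _ _ (ne_of_gt hm1), le_div_iff₀ hm1]
  have hmt : m * t = 2 := by rw [ht]; field_simp
  nlinarith [hlow, pow_pos ht0 3, pow_pos ht0 5, sq_nonneg t,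
    mul_le_mul_of_nonneg_left hlow (le_of_lt hm1)]

/-- Survival probability recurrence: p_j ≤ 2/(h−j). -/
theorem stmt11 (h : ℕ) (hh : 2 ≤ h) (p : ℕ → ℝ)
    (hmem : ∀ j ≤ h, p j ∈ Set.Icc (0:ℝ) 1)
    (hrec : ∀ j ≤ h - 1, p j ≤ 1 - Real.exp (-(p (j+1)))) :
    ∀ j ≤ h - 2, p j ≤ 2/((h:ℝ) - (j:ℝ)) := by
  have key : ∀ k : ℕ, ∀ j : ℕ, j + k = h - 2 → p j ≤ 2/((h:ℝ) - (j:ℝ)) := by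
    intro k
    induction k with
    | zero =>
      intro j hj
      simp only [Nat.add_zero] at hj
      have hj' : j + 2 = h := by omega
      have hcast : (h:ℝ) - (j:ℝ) = 2 := by
        have : (h:ℝ) = (j:ℝ) + 2 := by exact_mod_cast hj'.symm
        linarith
      rw [hcast]
      have := (hmem j (by omega)).2
      linarith
    | succ k ih =>
      intro j hj
      have hj1 : (j+1) + k = h - 2 := by omega
      have hle : j ≤ h - 1 := by omega
      have h1 := hrec j hle
      have h2 := ih (j+1) hj1
      set m : ℝ := (h:ℝ) - (j:ℝ) - 1 with hm
      have hm2 : 2 ≤ m := by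
        have : j + 3 ≤ h := by omega
        have : (j:ℝ) + 3 ≤ (h:ℝ) := by exact_mod_cast this
        simp only [hm]; linarith
      have hcast : (h:ℝ) - ((j:ℝ)+1) = m := by rw [hm]; ring
      rw [Nat.cast_add, Nat.cast_one, hcast] at h2
      have h3 : Real.exp (-(2/m)) ≤ Real.exp (-(p (j+1))) := by
        apply Real.exp_le_exp.2; linarith
      have h4 := key_ineq m hm2
      have hfinal : (m:ℝ) + 1 = (h:ℝ) - (j:ℝ) := by rw [hm]; ring
      rw [hfinal] at h4
      linarith
  intro j hj
  exact key (h - 2 - j) j (by omega)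
end

section
/- Lovász Local Lemma (asymmetric, existence form): Let 𝒜 be a finite set of events in a probability space, and for each A ∈ 𝒜 let Γ(A) ⊆ 𝒜 be a set such that A is mutually independent of the collection 𝒜 \ (Γ(A) ∪ {A}). If there exists x : 𝒜 → (0,1) with P[A] ≤ x(A)·∏_{B ∈ Γ(A)} (1 − x(B)) for all A ∈ 𝒜, then P[⋂_{A∈𝒜} Aᶜ] > 0; in particular there exists an outcome avoiding all events in 𝒜. -/
open MeasureTheory ProbabilityTheory

/-- Lovász Local Lemma (asymmetric, existence form). -/
theorem stmt15 {Ω ι : Type} [Fintype ι] [MeasurableSpace Ω]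
    (μ : Measure Ω) [IsProbabilityMeasure μ]
    (E : ι → Set Ω) (hE : ∀ i, MeasurableSet (E i))
    (Γ : ι → Finset ι)
    (hindep : ∀ i, Indep
      (MeasurableSpace.generateFrom {E i})
      (MeasurableSpace.generateFrom (E '' {j | j ≠ i ∧ j ∉ Γ i})) μ)
    (x : ι → ℝ) (hx : ∀ i, x i ∈ Set.Ioo (0:ℝ) 1)
    (hprob : ∀ i, (μ (E i)).toReal ≤ x i * ∏ j ∈ Γ i, (1 - x j)) :
    0 < μ (⋂ i, (E i)ᶜ) ∧ ∃ ω, ∀ i, ω ∉ E i := by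
  classical
  set C : Finset ι → Set Ω := fun S => ⋂ j ∈ S, (E j)ᶜ with hC
  have hCmeas : ∀ S : Finset ι, MeasurableSet (C S) := fun S =>
    MeasurableSet.biInter (S.countable_toSet) (fun j _ => (hE j).compl)
  set m : Set Ω → ℝ := fun s => (μ s).toReal with hm
  have hmnonneg : ∀ s, 0 ≤ m s := fun s => ENNReal.toReal_nonneg
  have hmono : ∀ {s t : Set Ω}, s ⊆ t → m s ≤ m t := by
    intro s t hst
    exact ENNReal.toReal_le_toReal (measure_ne_top μ s) (measure_ne_top μ t)
      |>.mpr (measure_mono hst)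
  have hCanti : ∀ {S T : Finset ι}, S ⊆ T → C T ⊆ C S := by
    intro S T hST ω hω
    simp only [hC, Set.mem_iInter] at hω ⊢
    exact fun j hj => hω j (hST hj)
  -- difference formula
  have hstep : ∀ (i : ι) (S : Finset ι),
      m (C (insert i S)) = m (C S) - m (E i ∩ C S) := by
    intro i S
    have h1 : C (insert i S) = C S \ (E i ∩ C S) := by
      ext ω
      simp only [hC, Set.mem_iInter, Set.mem_diff, Set.mem_inter_iff,
        Finset.mem_insert, Set.mem_compl_iff]
      constructor
      · intro h
        refine ⟨fun j hj => h j (Or.inr hj), fun hcon => (h i (Or.inl rfl)) hcon.1⟩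
      · rintro ⟨h1, h2⟩ j hj
        rcases hj with rfl | hj
        · exact fun hmem => h2 ⟨hmem, h1⟩
        · exact h1 j hj
    simp only [hm]
    rw [h1, measure_diff Set.inter_subset_right ((hE i).inter (hCmeas S)).nullMeasurableSet
      (measure_ne_top μ _),
      ENNReal.toReal_sub_of_le (measure_mono Set.inter_subset_right) (measure_ne_top μ _)]
  -- independence
  have hindep' : ∀ (i : ι) (S : Finset ι), (∀ j ∈ S, j ≠ i ∧ j ∉ Γ i) →
      m (E i ∩ C S) = m (E i) * m (C S) := by
    intro i S hS
    have hsmeas : MeasurableSet[MeasurableSpace.generateFrom {E i}] (E i) :=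
      MeasurableSpace.measurableSet_generateFrom rfl
    have htmeas : MeasurableSet[MeasurableSpace.generateFrom
        (E '' {j | j ≠ i ∧ j ∉ Γ i})] (C S) := by
      refine MeasurableSet.biInter (S.countable_toSet) (fun j hj => ?_)
      have hmem : E j ∈ E '' {j | j ≠ i ∧ j ∉ Γ i} :=
        Set.mem_image_of_mem E (hS j hj)
      exact (MeasurableSpace.measurableSet_generateFrom hmem).compl
    have h2 := ((hindep i).indepSet_of_measurableSet hsmeas htmeas).measure_inter_eq_mul
    simp only [hm]
    rw [h2, ENNReal.toReal_mul]
  -- main induction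
  have key : ∀ n : ℕ, ∀ S : Finset ι, S.card ≤ n →
      (0 < m (C S)) ∧ ∀ i ∉ S, m (E i ∩ C S) ≤ x i * m (C S) := by
    intro n
    induction n with
    | zero =>
      intro S hS
      have hSe : S = ∅ := Finset.card_eq_zero.mp (Nat.le_zero.mp hS)
      subst hSe
      have hCu : C ∅ = Set.univ := by simp [hC]
      have hmu : m (C ∅) = 1 := by rw [hCu]; simp [hm]
      constructor
      · rw [hmu]; norm_num
      · intro i _
        rw [hmu, mul_one]
        have h1 : m (E i ∩ C ∅) = m (E i) := by rw [hCu, Set.inter_univ]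
        rw [h1]
        calc m (E i) ≤ x i * ∏ j ∈ Γ i, (1 - x j) := hprob i
          _ ≤ x i * 1 := by
              refine mul_le_mul_of_nonneg_left ?_ (le_of_lt (hx i).1)
              exact Finset.prod_le_one (fun j _ => by linarith [(hx j).2])
                (fun j _ => by linarith [(hx j).1])
          _ = x i := mul_one _
    | succ n IH =>
      intro S hS
      -- part (b) first, for arbitrary S with card ≤ n+1
      have partb : ∀ i ∉ S, m (E i ∩ C S) ≤ x i * m (C S) := by
        intro i hiS
        set S₁ : Finset ι := S ∩ Γ i with hS₁
        set S₂ : Finset ι := S \ Γ i with hS₂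
        have hunion : S₁ ∪ S₂ = S := by
          ext j; simp [hS₁, hS₂]; tauto
        have hS₂prop : ∀ j ∈ S₂, j ≠ i ∧ j ∉ Γ i := by
          intro j hj
          rw [hS₂, Finset.mem_sdiff] at hj
          exact ⟨fun h => hiS (h ▸ hj.1), hj.2⟩
        -- peeling
        have peel : ∀ T : Finset ι, T ⊆ S₁ →
            (∏ j ∈ T, (1 - x j)) * m (C S₂) ≤ m (C (T ∪ S₂)) := by
          intro T
          induction T using Finset.induction_on with
          | empty => intro _; simp
          | @insert j T hjT ihT =>
            intro hsub
            have hjS₁ : j ∈ S₁ := hsub (Finset.mem_insert_self j T)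
            have hjS : j ∈ S ∧ j ∈ Γ i := Finset.mem_inter.mp (by simpa [hS₁] using hjS₁)
            have hTsub : T ⊆ S₁ := fun a ha => hsub (Finset.mem_insert_of_mem ha)
            have hjnot : j ∉ T ∪ S₂ := by
              rw [Finset.mem_union]
              rintro (h | h)
              · exact hjT h
              · exact (hS₂prop j h).2 hjS.2
            have hcard : (T ∪ S₂).card ≤ n := by
              have hsub2 : T ∪ S₂ ⊆ S.erase j := by
                intro a ha
                rw [Finset.mem_erase]
                rcases Finset.mem_union.mp ha with h | h
                · exact ⟨fun he => hjnot (he ▸ ha),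
                    (Finset.mem_inter.mp (by simpa [hS₁] using hTsub h)).1⟩
                · exact ⟨fun he => hjnot (he ▸ ha),
                    (Finset.mem_sdiff.mp (by simpa [hS₂] using h)).1⟩
              calc (T ∪ S₂).card ≤ (S.erase j).card := Finset.card_le_card hsub2
                _ ≤ S.card - 1 := le_of_eq (Finset.card_erase_of_mem hjS.1)
                _ ≤ n := by omega
            have hIHb := (IH (T ∪ S₂) hcard).2 j hjnot
            have heq2 : insert j T ∪ S₂ = insert j (T ∪ S₂) := Finset.insert_union j T S₂
            rw [heq2, hstep j (T ∪ S₂), Finset.prod_insert hjT, mul_assoc]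
            have h1 : (1 - x j) * m (C (T ∪ S₂)) ≤ m (C (T ∪ S₂)) - m (E j ∩ C (T ∪ S₂)) := by
              nlinarith [hmnonneg (C (T ∪ S₂))]
            have h2 : (1 - x j) * ((∏ j ∈ T, (1 - x j)) * m (C S₂))
                ≤ (1 - x j) * m (C (T ∪ S₂)) :=
              mul_le_mul_of_nonneg_left (ihT hTsub) (by linarith [(hx j).2])
            exact le_trans h2 h1
        -- product comparison
        have hprodle : ∏ j ∈ Γ i, (1 - x j) ≤ ∏ j ∈ S₁, (1 - x j) := by
          have hsub : S₁ ⊆ Γ i := by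
            intro a ha; exact (Finset.mem_inter.mp (hS₁ ▸ ha)).2
          rw [← Finset.prod_sdiff hsub]
          have h1 : ∏ j ∈ Γ i \ S₁, (1 - x j) ≤ 1 :=
            Finset.prod_le_one (fun j _ => by linarith [(hx j).2])
              (fun j _ => by linarith [(hx j).1])
          have h2 : (0:ℝ) ≤ ∏ j ∈ S₁, (1 - x j) :=
            Finset.prod_nonneg (fun j _ => by linarith [(hx j).2])
          nlinarith
        calc m (E i ∩ C S)
            ≤ m (E i ∩ C S₂) := by
              refine hmono (Set.inter_subset_inter_right _ (hCanti ?_))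
              rw [hS₂]; exact Finset.sdiff_subset
          _ = m (E i) * m (C S₂) := hindep' i S₂ hS₂prop
          _ ≤ (x i * ∏ j ∈ Γ i, (1 - x j)) * m (C S₂) :=
              mul_le_mul_of_nonneg_right (hprob i) (hmnonneg _)
          _ ≤ (x i * ∏ j ∈ S₁, (1 - x j)) * m (C S₂) := by
              refine mul_le_mul_of_nonneg_right ?_ (hmnonneg _)
              exact mul_le_mul_of_nonneg_left hprodle (le_of_lt (hx i).1)
          _ = x i * ((∏ j ∈ S₁, (1 - x j)) * m (C S₂)) := by ring
          _ ≤ x i * m (C (S₁ ∪ S₂)) :=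
              mul_le_mul_of_nonneg_left (peel S₁ (le_refl _)) (le_of_lt (hx i).1)
          _ = x i * m (C S) := by rw [hunion]
      refine ⟨?_, partb⟩
      -- positivity
      rcases Finset.eq_empty_or_nonempty S with rfl | ⟨i, hi⟩
      · have hCu : C ∅ = Set.univ := by simp [hC]
        rw [hCu]; simp [hm]
      · set S' := S.erase i with hS'
        have hcard' : S'.card ≤ n := by
          have h1 : S'.card = S.card - 1 := by
            rw [hS']; exact Finset.card_erase_of_mem hi
          have h2 : 0 < S.card := Finset.card_pos.mpr ⟨i, hi⟩
          omega
        have hIH := IH S' hcard'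
        have hiS' : i ∉ S' := Finset.notMem_erase i S
        have hins : insert i S' = S := Finset.insert_erase hi
        have h1 : m (C S) = m (C S') - m (E i ∩ C S') := by
          rw [← hins]; exact hstep i S'
        have h2 := hIH.2 i hiS'
        have h3 := hIH.1
        have := (hx i).2
        nlinarith
  have hfin := key (Finset.univ.card) Finset.univ (le_refl _)
  have heq : (⋂ i, (E i)ᶜ) = C Finset.univ := by
    simp [hC]
  have hpos : 0 < μ (⋂ i, (E i)ᶜ) := by
    rw [heq]
    refine pos_iff_ne_zero.mpr (fun h => ?_)
    have h1 := hfin.1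
    simp only [hm, h, ENNReal.toReal_zero] at h1
    exact lt_irrefl 0 h1
  refine ⟨hpos, ?_⟩
  obtain ⟨ω, hω⟩ := MeasureTheory.nonempty_of_measure_ne_zero (ne_of_gt hpos)
  exact ⟨ω, by simpa using hω⟩
end
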